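/- Let X = A^ℕ for a finite alphabet A, T the left shift, φ continuous, L the transfer operator for φ, and ν a Borel probability measure on X with L*ν = λν for some λ > 0 (i.e. ∫ Lf dν = λ ∫ f dν for all continuous f). Let μ be a T-invariant Borel probability measure with μ ≪ ν and continuous Radon–Nikodym derivative h = dμ/dν. Then Lh = λh holds ν-almost everywhere. -/

import Mathlib

open MeasureTheory

/-- Prepending a symbol to a one-sided configuration. -/
def consSeq {A : Type*} (a : A) (x : ℕ → A) : ℕ → A :=
  fun n => match n with
  | 0 => a
  | Nat.succ m => x m

/-- The left shift on `A^ℕ`. -/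
def shiftT {A : Type*} : (ℕ → A) → (ℕ → A) := fun x n => x (n + 1)

/-!
Pairing with a continuous test function `g` and using `L((g ∘ T) · h) = g · Lh`, the eigenmeasure
identity and the shift invariance of `μ = h ν` give
`∫ g · Lh dν = λ ∫ (g ∘ T) · h dν = λ ∫ g · h dν`.
Taking `g = Lh - λh` shows `∫ (Lh - λh)² dν = 0`.
-/

theorem ae_eq_of_forall_integral_mul_eq {X : Type*} [TopologicalSpace X] [CompactSpace X]
    [MeasurableSpace X] [OpensMeasurableSpace X] {ν : Measure X} [IsFiniteMeasure ν]
    {F G : X → ℝ} (hF : Continuous F) (hG : Continuous G)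
    (hFG : ∀ g : X → ℝ, Continuous g → ∫ x, g x * F x ∂ν = ∫ x, g x * G x ∂ν) :
    F =ᵐ[ν] G := by
  have integrable (f : X → ℝ) (hf : Continuous f) : Integrable f ν :=
    hf.integrable_of_hasCompactSupport (.of_compactSpace f)
  set d := F - G
  have hd : Continuous d := hF.sub hG
  have hsq_zero : ∫ x, d x * d x ∂ν = 0 := by
    have hexpand : (fun x => d x * d x) = fun x => d x * F x - d x * G x :=
      funext fun x => mul_sub (d x) (F x) (G x)
    rw [hexpand, integral_sub (integrable (fun x => d x * F x) (hd.mul hF))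
      (integrable (fun x => d x * G x) (hd.mul hG)), hFG d hd, sub_self]
  have hsq_ae : (fun x => d x * d x) =ᵐ[ν] 0 :=
    (integral_eq_zero_iff_of_nonneg (fun x => mul_self_nonneg (d x))
      (integrable _ (hd.mul hd))).mp hsq_zero
  filter_upwards [hsq_ae] with x hx
  exact sub_eq_zero.mp (mul_self_eq_zero.mp hx)

theorem integral_comp_mul_density_of_map_eq {X : Type*} [TopologicalSpace X] [MeasurableSpace X]
    [BorelSpace X] {μ ν : Measure X} {T : X → X} (hT : Continuous T)
    (hinv : μ.map T = μ) {h : X → ℝ}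
    (hrn : ∀ f : X → ℝ, Continuous f → ∫ x, f x ∂μ = ∫ x, f x * h x ∂ν)
    {g : X → ℝ} (hg : Continuous g) :
    ∫ x, g (T x) * h x ∂ν = ∫ x, g x * h x ∂ν := by
  rw [← hrn (fun x => g (T x)) (hg.comp hT), ← hrn g hg,
    ← integral_map hT.aemeasurable hg.aestronglyMeasurable, hinv]

section Shift

variable {A : Type*}

theorem continuous_consSeq [TopologicalSpace A] (a : A) : Continuous (consSeq a) :=
  continuous_pi fun
    | 0 => continuous_const
    | n + 1 => continuous_apply n

theorem continuous_shiftT [TopologicalSpace A] : Continuous (shiftT : (ℕ → A) → ℕ → A) :=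
  continuous_pi fun n => continuous_apply (n + 1)

@[simp]
theorem shiftT_consSeq (a : A) (x : ℕ → A) : shiftT (consSeq a x) = x := rfl

variable [Fintype A]

/-- `L_φ f x = ∑_{T y = x} e^{φ y} f y`: the preimages of `x` under the shift are the
`consSeq a x`. -/
noncomputable def transferOp (φ f : (ℕ → A) → ℝ) (x : ℕ → A) : ℝ :=
  ∑ a : A, Real.exp (φ (consSeq a x)) * f (consSeq a x)

theorem Continuous.transferOp [TopologicalSpace A] {φ f : (ℕ → A) → ℝ} (hφ : Continuous φ)
    (hf : Continuous f) : Continuous (transferOp φ f) :=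
  continuous_finsetSum _ fun a _ =>
    (Real.continuous_exp.comp (hφ.comp (continuous_consSeq a))).mul
      (hf.comp (continuous_consSeq a))

theorem transferOp_comp_shiftT_mul (φ g f : (ℕ → A) → ℝ) (x : ℕ → A) :
    transferOp φ (fun y => g (shiftT y) * f y) x = g x * transferOp φ f x := by
  simp only [transferOp, shiftT_consSeq, Finset.mul_sum]
  exact Finset.sum_congr rfl fun a _ => mul_left_comm _ _ _

end Shift

theorem rn_derivative_is_eigenfunction_general
    {A : Type*} [Fintype A]
    [TopologicalSpace A] [MeasurableSpace A]
    [BorelSpace A]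
    (φ : (ℕ → A) → ℝ) (hφ : Continuous φ)
    (lam : ℝ)
    (ν : Measure (ℕ → A)) [IsProbabilityMeasure ν]
    (heigm : ∀ f : (ℕ → A) → ℝ, Continuous f →
      ∫ x, (∑ a : A, Real.exp (φ (consSeq a x)) * f (consSeq a x)) ∂ν =
        lam * ∫ x, f x ∂ν)
    (μ : Measure (ℕ → A))
    (hinv : Measure.map shiftT μ = μ)
    (h : (ℕ → A) → ℝ) (hh : Continuous h)
    (hrn : ∀ f : (ℕ → A) → ℝ, Continuous f →
      ∫ x, f x ∂μ = ∫ x, f x * h x ∂ν) :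
    (fun x => ∑ a : A, Real.exp (φ (consSeq a x)) * h (consSeq a x))
      =ᵐ[ν] (fun x => lam * h x) := by
  change transferOp φ h =ᵐ[ν] fun x => lam * h x
  refine ae_eq_of_forall_integral_mul_eq (hφ.transferOp hh) (continuous_const.mul hh)
    fun g hg => ?_
  have hgT : Continuous fun x => g (shiftT x) * h x := (hg.comp continuous_shiftT).mul hh
  calc ∫ x, g x * transferOp φ h x ∂ν
      = ∫ x, transferOp φ (fun y => g (shiftT y) * h y) x ∂ν := by
        simp only [transferOp_comp_shiftT_mul]
    _ = lam * ∫ x, g (shiftT x) * h x ∂ν := heigm _ hgT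
    _ = lam * ∫ x, g x * h x ∂ν := by
        rw [integral_comp_mul_density_of_map_eq continuous_shiftT hinv hrn hg]
    _ = ∫ x, g x * (lam * h x) ∂ν := by
        rw [← integral_const_mul]
        simp only [mul_left_comm]

/-- if `ν` is an eigenmeasure of the transfer operator `L_φ` with
eigenvalue `λ > 0`, and `μ` is a shift-invariant probability measure with
`μ ≪ ν` whose Radon–Nikodym derivative `h = dμ/dν` is continuous, then
`Lh = λh` holds `ν`-a.e. -/
theorem rn_derivative_is_eigenfunction
    {A : Type*} [Fintype A] [Nonempty A]
    [TopologicalSpace A] [DiscreteTopology A] [MeasurableSpace A]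
    [BorelSpace A]
    (φ : (ℕ → A) → ℝ) (hφ : Continuous φ)
    (lam : ℝ) (hlam : 0 < lam)
    (ν : Measure (ℕ → A)) [IsProbabilityMeasure ν]
    (heigm : ∀ f : (ℕ → A) → ℝ, Continuous f →
      ∫ x, (∑ a : A, Real.exp (φ (consSeq a x)) * f (consSeq a x)) ∂ν =
        lam * ∫ x, f x ∂ν)
    (μ : Measure (ℕ → A)) [IsProbabilityMeasure μ]
    (hinv : Measure.map shiftT μ = μ)
    (hac : μ ≪ ν)
    (h : (ℕ → A) → ℝ) (hh : Continuous h) (hhpos : ∀ x, 0 ≤ h x)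
    (hrn : ∀ f : (ℕ → A) → ℝ, Continuous f →
      ∫ x, f x ∂μ = ∫ x, f x * h x ∂ν) :
    (fun x => ∑ a : A, Real.exp (φ (consSeq a x)) * h (consSeq a x))
      =ᵐ[ν] (fun x => lam * h x) :=
  rn_derivative_is_eigenfunction_general φ hφ lam ν heigm μ hinv h hh hrn
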